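/- Let μ be a Borel probability measure on a compact metric space X, T: X → X continuous, and ψ ∈ L²(μ) orthogonal to all functions φ - φ∘T with φ continuous. If ψ₊ = max(ψ, 0) is not μ-almost everywhere zero, then the measure ν₊ defined by dν₊ = ψ₊ dμ is T-invariant. -/

import Mathlib

/-!
Let `ν₊`, `ν₋` be the measures with densities `ψ⁺`, `ψ⁻` with respect to `μ`. Orthogonality to
all coboundaries `φ - φ ∘ T` says that `ν₊ - ν₋` is `T`-invariant on continuous functions, i.e.
`T_* ν₊ + ν₋ = ν₊ + T_* ν₋` as measures. Since `ν₋` vanishes on a set carrying `ν₊`, restricting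
this identity to that set gives `ν₊ ≤ T_* ν₊`, and two finite measures of the same total mass, one
below the other, coincide.
-/

open MeasureTheory Set BoundedContinuousFunction

namespace MeasureTheory.Measure

variable {α : Type*} [MeasurableSpace α] {μ ν : Measure α} {T : α → α}

theorem le_map_of_mutuallySingular_of_map_add_eq_add_map (hμν : μ ⟂ₘ ν)
    (h : μ.map T + ν = μ + ν.map T) : μ ≤ μ.map T := by
  obtain ⟨s, -, hμs, hνs⟩ := hμν
  intro B
  calc μ B = μ (B \ s) := (measure_sdiff_null hμs).symm
    _ ≤ μ (B \ s) + ν.map T (B \ s) := le_self_add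
    _ = μ.map T (B \ s) + ν (B \ s) := by simpa using congrArg (· (B \ s)) h.symm
    _ = μ.map T (B \ s) := by
      rw [measure_mono_null (fun x hx ↦ hx.2) hνs, add_zero]
    _ ≤ μ.map T B := measure_mono sdiff_subset

theorem map_eq_self_of_mutuallySingular_of_map_add_eq_add_map [IsFiniteMeasure μ]
    (hT : Measurable T) (hμν : μ ⟂ₘ ν) (h : μ.map T + ν = μ + ν.map T) : μ.map T = μ :=
  (eq_of_le_of_measure_univ_eq (le_map_of_mutuallySingular_of_map_add_eq_add_map hμν h)
    (by rw [map_apply hT .univ, preimage_univ])).symm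

end MeasureTheory.Measure

namespace MeasureTheory

section WithDensity

variable {α : Type*} [MeasurableSpace α] {μ : Measure α} {ψ : α → ℝ}

theorem integral_withDensity_ofReal_sub_integral_withDensity_ofReal_neg (hψm : Measurable ψ)
    (hψ : Integrable ψ μ) {g : α → ℝ} (hg : AEStronglyMeasurable g μ) {C : ℝ}
    (hgC : ∀ x, ‖g x‖ ≤ C) :
    ∫ x, g x ∂μ.withDensity (fun x ↦ ENNReal.ofReal (ψ x)) -
      ∫ x, g x ∂μ.withDensity (fun x ↦ ENNReal.ofReal (-ψ x)) = ∫ x, g x * ψ x ∂μ := by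
  have hfin : ∀ f : α → ℝ, ∀ᵐ x ∂μ, ENNReal.ofReal (f x) < ⊤ :=
    fun _ ↦ ae_of_all _ fun _ ↦ ENNReal.ofReal_lt_top
  rw [integral_withDensity_eq_integral_toReal_smul hψm.ennreal_ofReal (hfin _),
    integral_withDensity_eq_integral_toReal_smul hψm.fun_neg.ennreal_ofReal (hfin _),
    ← integral_sub]
  · congr 1 with x
    simp only [ENNReal.toReal_ofReal', smul_eq_mul]
    rw [← sub_mul, max_zero_sub_max_neg_zero_eq_self, mul_comm]
  · simpa only [ENNReal.toReal_ofReal', smul_eq_mul] using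
      hψ.pos_part.mul_bdd hg (ae_of_all _ hgC)
  · simpa only [ENNReal.toReal_ofReal', smul_eq_mul] using
      hψ.neg_part.mul_bdd hg (ae_of_all _ hgC)

end WithDensity

section Borel

variable {X : Type*} [TopologicalSpace X] [HasOuterApproxClosed X] [MeasurableSpace X]
  [BorelSpace X] {μ : Measure X} {T : X → X} {ψ : X → ℝ}

theorem map_withDensity_ofReal_add_eq_add_map (hT : Continuous T) (hψm : Measurable ψ)
    (hψ : Integrable ψ μ) (horth : ∀ g : X →ᵇ ℝ, ∫ x, (g x - g (T x)) * ψ x ∂μ = 0) :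
    (μ.withDensity fun x ↦ ENNReal.ofReal (ψ x)).map T +
        μ.withDensity (fun x ↦ ENNReal.ofReal (-ψ x)) =
      μ.withDensity (fun x ↦ ENNReal.ofReal (ψ x)) +
        (μ.withDensity fun x ↦ ENNReal.ofReal (-ψ x)).map T := by
  set νpos := μ.withDensity fun x ↦ ENNReal.ofReal (ψ x)
  set νneg := μ.withDensity fun x ↦ ENNReal.ofReal (-ψ x)
  have : IsFiniteMeasure νpos := isFiniteMeasure_withDensity_ofReal hψ.2
  have : IsFiniteMeasure νneg := isFiniteMeasure_withDensity_ofReal hψ.neg.2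
  refine ext_of_forall_integral_eq_of_IsFiniteMeasure fun g ↦ ?_
  let gT : X →ᵇ ℝ := g.compContinuous ⟨T, hT⟩
  have hg := integral_withDensity_ofReal_sub_integral_withDensity_ofReal_neg hψm hψ
    g.continuous.aestronglyMeasurable g.norm_coe_le_norm
  have hgT := integral_withDensity_ofReal_sub_integral_withDensity_ofReal_neg hψm hψ
    gT.continuous.aestronglyMeasurable gT.norm_coe_le_norm
  have hinv : ∫ x, g x * ψ x ∂μ = ∫ x, gT x * ψ x ∂μ := by
    have hgψ := hψ.bdd_mul g.continuous.aestronglyMeasurable (ae_of_all _ g.norm_coe_le_norm)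
    have hgTψ := hψ.bdd_mul gT.continuous.aestronglyMeasurable (ae_of_all _ gT.norm_coe_le_norm)
    rw [← sub_eq_zero, ← integral_sub hgψ hgTψ]
    simpa only [sub_mul, gT, compContinuous_apply, ContinuousMap.coe_mk] using horth g
  rw [integral_add_measure (g.integrable _) (g.integrable _),
    integral_add_measure (g.integrable _) (g.integrable _),
    integral_map hT.aemeasurable g.continuous.aestronglyMeasurable,
    integral_map hT.aemeasurable g.continuous.aestronglyMeasurable]
  change ∫ x, gT x ∂νpos + _ = _ + ∫ x, gT x ∂νneg
  linarith

end Borel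

end MeasureTheory

theorem stmt_5_general {X : Type*} [MetricSpace X] [CompactSpace X]
    [MeasurableSpace X] [BorelSpace X]
    (μ : Measure X) [IsProbabilityMeasure μ]
    (T : X → X) (hT : Continuous T)
    (ψ : X → ℝ) (hψm : Measurable ψ) (hψ : MemLp ψ 2 μ)
    (horth : ∀ φ : C(X, ℝ), ∫ x, (φ x - φ (T x)) * ψ x ∂μ = 0)
    (ν : Measure X)
    (hν : ν = μ.withDensity (fun x => ENNReal.ofReal (max (ψ x) 0))) :
    ∀ B : Set X, MeasurableSet B → ν (T ⁻¹' B) = ν B := by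
  have hψ₁ : Integrable ψ μ := hψ.integrable one_le_two
  have hν_ofReal : ν = μ.withDensity fun x ↦ ENNReal.ofReal (ψ x) := by simp [hν]
  subst hν_ofReal
  have : IsFiniteMeasure _ := isFiniteMeasure_withDensity_ofReal (μ := μ) hψ₁.2
  have hinv := Measure.map_eq_self_of_mutuallySingular_of_map_add_eq_add_map
    hT.measurable (withDensity_ofReal_mutuallySingular hψm)
    (map_withDensity_ofReal_add_eq_add_map hT hψm hψ₁ fun g ↦ horth g.toContinuousMap)
  intro B hB
  rw [← Measure.map_apply hT.measurable hB, hinv]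

theorem stmt_5 {X : Type*} [MetricSpace X] [CompactSpace X]
    [MeasurableSpace X] [BorelSpace X]
    (μ : Measure X) [IsProbabilityMeasure μ]
    (T : X → X) (hT : Continuous T)
    (ψ : X → ℝ) (hψm : Measurable ψ) (hψ : MemLp ψ 2 μ)
    (horth : ∀ φ : C(X, ℝ), ∫ x, (φ x - φ (T x)) * ψ x ∂μ = 0)
    (hpos : ¬ ((fun x => max (ψ x) 0) =ᵐ[μ] (0 : X → ℝ)))
    (ν : Measure X)
    (hν : ν = μ.withDensity (fun x => ENNReal.ofReal (max (ψ x) 0))) :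
    ∀ B : Set X, MeasurableSet B → ν (T ⁻¹' B) = ν B :=
  stmt_5_general μ T hT ψ hψm hψ horth ν hν
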